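/- Let X, Y be Borel subsets of [-1/2,1/2]^d ⊂ ℝ^d of strictly positive Lebesgue measure. Let f ∈ L¹(X) and g ∈ L¹(Y) (not necessarily nonnegative) have the same total mass m := ∫_X f = ∫_Y g ∈ ℝ, and suppose ‖f‖_{L^∞(X)} < ε and ‖g‖_{L^∞(Y)} < ε. Then there exists h ∈ L¹(X × Y) whose marginals are f and g (i.e. ∫_Y h(x,y) dy = f(x) for a.e. x ∈ X and ∫_X h(x,y) dx = g(y) for a.e. y ∈ Y) and which satisfies ‖h‖_{L^∞(X×Y)} < 3ε·(1/L^d(X) + 1/L^d(Y)), where L^d denotes d-dimensional Lebesgue measure. -/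

import Mathlib

/-! The density `h(x, y) = f(x)/|Y| + g(y)/|X| - m/(|X| |Y|)` does the job: integrating out `y`
gives `f(x) + m/|X| - m/|X|`, and symmetrically for `x`. Its three terms are bounded by `ε/|Y|`,
`ε/|X|` and `|m|/(|X| |Y|) ≤ ε/|Y|` (as `|m| ≤ ε |X|`), so `‖h‖_∞ ≤ 2ε(1/|X| + 1/|Y|)`. -/

open MeasureTheory Filter Set Topology

noncomputable section

/-- The cube `[-1/2, 1/2]^d ⊆ ℝ^d`. -/
def cube (d : ℕ) : Set (Fin d → ℝ) :=
  Set.Icc (fun _ => -(1/2 : ℝ)) (fun _ => (1/2 : ℝ))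

namespace MeasureTheory

variable {α β : Type*} [MeasurableSpace α] [MeasurableSpace β]

lemma ae_norm_le_of_eLpNorm_top_lt {E : Type*} [NormedAddCommGroup E] {μ : Measure α}
    {f : α → E} {ε : ℝ} (hf : eLpNorm f ⊤ μ < ENNReal.ofReal ε) : ∀ᵐ x ∂μ, ‖f x‖ ≤ ε := by
  filter_upwards [enorm_ae_le_eLpNormEssSup f μ] with x hx
  rw [← eLpNorm_exponent_top, ← ofReal_norm] at hx
  exact ((ENNReal.ofReal_lt_ofReal_iff_of_nonneg (norm_nonneg _)).1 (hx.trans_lt hf)).le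

def gluedDensity (μ : Measure α) (ν : Measure β) (f : α → ℝ) (g : β → ℝ) (z : α × β) : ℝ :=
  f z.1 / ν.real univ + g z.2 / μ.real univ - (∫ x, f x ∂μ) / (μ.real univ * ν.real univ)

variable {μ : Measure α} {ν : Measure β} {f : α → ℝ} {g : β → ℝ}

lemma integrable_gluedDensity [IsFiniteMeasure μ] [IsFiniteMeasure ν]
    (hf : Integrable f μ) (hg : Integrable g ν) :
    Integrable (gluedDensity μ ν f g) (μ.prod ν) :=
  (((hf.comp_fst ν).div_const _).add ((hg.comp_snd μ).div_const _)).sub (integrable_const _)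

lemma integral_gluedDensity_left [IsFiniteMeasure ν] (hg : Integrable g ν)
    (hν : ν.real univ ≠ 0) (hmass : ∫ y, g y ∂ν = ∫ x, f x ∂μ) (x : α) :
    ∫ y, gluedDensity μ ν f g (x, y) ∂ν = f x := by
  simp only [gluedDensity]
  rw [integral_sub (by fun_prop) (by fun_prop), integral_add (by fun_prop) (by fun_prop),
    integral_const, integral_const, integral_div, hmass, smul_eq_mul, smul_eq_mul]
  field_simp
  ring

lemma integral_gluedDensity_right [IsFiniteMeasure μ] (hf : Integrable f μ)
    (hμ : μ.real univ ≠ 0) (y : β) :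
    ∫ x, gluedDensity μ ν f g (x, y) ∂μ = g y := by
  simp only [gluedDensity]
  rw [integral_sub (by fun_prop) (by fun_prop), integral_add (by fun_prop) (by fun_prop),
    integral_const, integral_const, integral_div, smul_eq_mul, smul_eq_mul]
  field_simp
  ring

lemma eLpNorm_top_gluedDensity_le [IsFiniteMeasure μ] [SFinite ν] {ε : ℝ} (hε : 0 ≤ ε)
    (hf : ∀ᵐ x ∂μ, ‖f x‖ ≤ ε) (hg : ∀ᵐ y ∂ν, ‖g y‖ ≤ ε) :
    eLpNorm (gluedDensity μ ν f g) ⊤ (μ.prod ν) ≤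
      ENNReal.ofReal (2 * ε * (1 / μ.real univ + 1 / ν.real univ)) := by
  have hμ := measureReal_nonneg (μ := μ) (s := univ)
  have hν := measureReal_nonneg (μ := ν) (s := univ)
  have hmass : ‖∫ x, f x ∂μ‖ / μ.real univ ≤ ε :=
    div_le_of_le_mul₀ hμ hε (norm_integral_le_of_norm_le_const hf)
  rw [eLpNorm_exponent_top]
  refine eLpNormEssSup_le_of_ae_bound ?_
  filter_upwards [Measure.quasiMeasurePreserving_fst.ae hf,
    Measure.quasiMeasurePreserving_snd.ae hg] with z hfz hgz
  calc ‖gluedDensity μ ν f g z‖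
      ≤ ‖f z.1‖ / ν.real univ + ‖g z.2‖ / μ.real univ
          + ‖∫ x, f x ∂μ‖ / μ.real univ / ν.real univ := by
        refine (norm_sub_le _ _).trans (add_le_add (norm_add_le _ _) le_rfl) |>.trans_eq ?_
        rw [norm_div, norm_div, norm_div, Real.norm_of_nonneg hμ, Real.norm_of_nonneg hν,
          Real.norm_of_nonneg (mul_nonneg hμ hν), div_div]
    _ ≤ ε / ν.real univ + ε / μ.real univ + ε / ν.real univ := by gcongr
    _ ≤ 2 * ε * (1 / μ.real univ + 1 / ν.real univ) := by
        have : 0 ≤ ε / μ.real univ := by positivity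
        linarith [show 2 * ε * (1 / μ.real univ + 1 / ν.real univ) =
          2 * (ε / μ.real univ) + 2 * (ε / ν.real univ) by ring]

end MeasureTheory

lemma volume_ne_top_of_subset_cube {d : ℕ} {X : Set (Fin d → ℝ)} (hX : X ⊆ cube d) :
    volume X ≠ ⊤ :=
  measure_ne_top_of_subset hX isCompact_Icc.measure_lt_top.ne

theorem small_marginals_glue (d : ℕ) (X Y : Set (Fin d → ℝ))
    (hX_sub : X ⊆ cube d) (hY_sub : Y ⊆ cube d)
    (hX_pos : 0 < volume X) (hY_pos : 0 < volume Y)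
    (f g : (Fin d → ℝ) → ℝ) (ε m : ℝ)
    (hf_int : IntegrableOn f X volume) (hg_int : IntegrableOn g Y volume)
    (hf_mass : ∫ x in X, f x = m) (hg_mass : ∫ y in Y, g y = m)
    (hf_bdd : eLpNorm f ⊤ (volume.restrict X) < ENNReal.ofReal ε)
    (hg_bdd : eLpNorm g ⊤ (volume.restrict Y) < ENNReal.ofReal ε) :
    ∃ h : ((Fin d → ℝ) × (Fin d → ℝ)) → ℝ,
      IntegrableOn h (X ×ˢ Y) volume ∧
      (∀ᵐ x ∂volume.restrict X, (∫ y in Y, h (x, y)) = f x) ∧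
      (∀ᵐ y ∂volume.restrict Y, (∫ x in X, h (x, y)) = g y) ∧
      eLpNorm h ⊤ (volume.restrict (X ×ˢ Y)) <
        ENNReal.ofReal (3 * ε * (1 / (volume X).toReal + 1 / (volume Y).toReal)) := by
  have hX_fin := volume_ne_top_of_subset_cube hX_sub
  have hY_fin := volume_ne_top_of_subset_cube hY_sub
  have := isFiniteMeasure_restrict.2 hX_fin
  have := isFiniteMeasure_restrict.2 hY_fin
  have hvX : 0 < volume.real X := ENNReal.toReal_pos hX_pos.ne' hX_fin
  have hvY : 0 < volume.real Y := ENNReal.toReal_pos hY_pos.ne' hY_fin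
  have hε : 0 < ε := ENNReal.ofReal_pos.1 (hf_bdd.trans_le' bot_le)
  have hprod : volume.restrict (X ×ˢ Y) = (volume.restrict X).prod (volume.restrict Y) := by
    rw [Measure.volume_eq_prod, Measure.prod_restrict]
  refine ⟨gluedDensity (volume.restrict X) (volume.restrict Y) f g, ?_, ?_, ?_, ?_⟩
  · rw [IntegrableOn, hprod]
    exact integrable_gluedDensity hf_int hg_int
  · exact ae_of_all _ (integral_gluedDensity_left hg_int
      ((measureReal_restrict_apply_univ Y).trans_ne hvY.ne') (hg_mass.trans hf_mass.symm))
  · exact ae_of_all _ (integral_gluedDensity_right hf_int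
      ((measureReal_restrict_apply_univ X).trans_ne hvX.ne'))
  · rw [hprod, ← measureReal_def, ← measureReal_def]
    refine (eLpNorm_top_gluedDensity_le hε.le (ae_norm_le_of_eLpNorm_top_lt hf_bdd)
      (ae_norm_le_of_eLpNorm_top_lt hg_bdd)).trans_lt ?_
    rw [measureReal_restrict_apply_univ, measureReal_restrict_apply_univ,
      ENNReal.ofReal_lt_ofReal_iff (by positivity)]
    gcongr
    norm_num
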